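/- arXiv:1803.05050 — 6 statements merged into one kernel-verified Lean document; each statement's English description precedes it below -/
import Mathlib

section
/- In the column sampling model with c samples and sampling probability p (p_j > 0 for all j), the random matrix C·Cᵀ is an unbiased estimator of A·Aᵀ: for every pair of row indices (i, i'), the expectation of the (i,i') entry of C·Cᵀ over the random indices equals the (i,i') entry of A·Aᵀ. -/
/-!
Expanding the entry, `(C Cᵀ) i i' = ∑ t, A i (i_t) * A i' (i_t) / (c * p (i_t))` is a sum of `c`
terms that depend on one sampled index each. Under the product distribution each term has the
marginal expectation `∑ j, p j * (A i j * A i' j / (c * p j)) = (A Aᵀ) i i' / c`: the sampling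
probability cancels the importance weight `1 / p j`.
-/

open Finset Matrix

/-- The column-sampled matrix `C ∈ ℝ^{M×c}`: its `t`-th column is
`A^{(ω t)} / √(c * p (ω t))`, where `ω : Fin c → Fin N` records the sampled
column indices. -/
noncomputable def sampledC {M N : ℕ} (A : Matrix (Fin M) (Fin N) ℝ) (c : ℕ)
    (p : Fin N → ℝ) (ω : Fin c → Fin N) : Matrix (Fin M) (Fin c) ℝ :=
  fun i t => A i (ω t) / Real.sqrt (c * p (ω t))

section ProductWeights

variable {ι α R : Type*} [Fintype ι] [DecidableEq ι] [Fintype α] [CommSemiring R]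

theorem sum_pi_prod_mul_apply {p : α → R} (hp : ∑ j, p j = 1) (f : α → R) (t : ι) :
    ∑ ω : ι → α, (∏ s, p (ω s)) * f (ω t) = ∑ j, p j * f j := by
  have hfactor : ∀ ω : ι → α,
      (∏ s, p (ω s)) * f (ω t) = ∏ s, p (ω s) * if s = t then f (ω s) else 1 := by
    intro ω
    rw [prod_mul_distrib, prod_ite_eq' univ t, if_pos (mem_univ t)]
  calc ∑ ω : ι → α, (∏ s, p (ω s)) * f (ω t)
      = ∏ s, ∑ j, p j * (if s = t then f j else 1) := by
        simp_rw [hfactor, Fintype.prod_sum]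
    _ = ∏ s, if s = t then ∑ j, p j * f j else 1 := by
        refine prod_congr rfl fun s _ => ?_
        split_ifs <;> simp [hp]
    _ = ∑ j, p j * f j := by rw [prod_ite_eq' univ t, if_pos (mem_univ t)]

theorem sum_pi_prod_mul_sum_apply {p : α → R} (hp : ∑ j, p j = 1) (f : α → R) :
    ∑ ω : ι → α, (∏ s, p (ω s)) * ∑ t, f (ω t) = Fintype.card ι * ∑ j, p j * f j := by
  calc ∑ ω : ι → α, (∏ s, p (ω s)) * ∑ t, f (ω t)
      = ∑ t, ∑ ω : ι → α, (∏ s, p (ω s)) * f (ω t) := by simp_rw [mul_sum]; exact sum_comm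
    _ = Fintype.card ι * ∑ j, p j * f j := by
        rw [sum_congr rfl fun t _ => sum_pi_prod_mul_apply hp f t, sum_const, card_univ,
          nsmul_eq_mul]

end ProductWeights

theorem sampledC_mul_transpose_apply {M N : ℕ} (A : Matrix (Fin M) (Fin N) ℝ) (c : ℕ)
    {p : Fin N → ℝ} (hp : ∀ j, 0 ≤ p j) (ω : Fin c → Fin N) (i i' : Fin M) :
    (sampledC A c p ω * (sampledC A c p ω)ᵀ) i i'
      = ∑ t, A i (ω t) * A i' (ω t) / (c * p (ω t)) := by
  refine mul_apply.trans (sum_congr rfl fun t _ => ?_)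
  rw [transpose_apply, sampledC, sampledC, div_mul_div_comm,
    Real.mul_self_sqrt (mul_nonneg c.cast_nonneg (hp _))]

/-- In the column sampling model (indices drawn i.i.d. with `P[i_t = j] = p j`),
`C * Cᵀ` is an unbiased estimator of `A * Aᵀ`: for every pair of row indices
`(i, i')`, the expectation of the `(i, i')` entry of `C * Cᵀ` equals the
`(i, i')` entry of `A * Aᵀ`. -/
theorem expectation_sampled_CCT_eq_AAT {M N : ℕ} (A : Matrix (Fin M) (Fin N) ℝ)
    (c : ℕ) (hc : 1 ≤ c) (p : Fin N → ℝ) (hp : ∀ j, 0 < p j)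
    (hp1 : ∑ j, p j = 1) (i i' : Fin M) :
    ∑ ω : Fin c → Fin N, (∏ t, p (ω t)) *
        ((sampledC A c p ω) * (sampledC A c p ω)ᵀ) i i'
      = (A * Aᵀ) i i' := by
  have hc0 : (c : ℝ) ≠ 0 := Nat.cast_ne_zero.mpr (by omega)
  calc ∑ ω : Fin c → Fin N, (∏ t, p (ω t)) * (sampledC A c p ω * (sampledC A c p ω)ᵀ) i i'
      = ∑ ω : Fin c → Fin N, (∏ t, p (ω t)) *
          ∑ t, A i (ω t) * A i' (ω t) / (c * p (ω t)) := by
        simp_rw [sampledC_mul_transpose_apply A c (fun j => (hp j).le)]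
    _ = c * ∑ j, p j * (A i j * A i' j / (c * p j)) := by
        rw [sum_pi_prod_mul_sum_apply hp1 fun j => A i j * A i' j / (c * p j), Fintype.card_fin]
    _ = (A * Aᵀ) i i' := by
        rw [mul_apply, mul_sum]
        refine sum_congr rfl fun j _ => ?_
        rw [transpose_apply]
        field_simp [(hp j).ne']
end

section
/- In the column sampling model with c samples and sampling probability p (p_j > 0 for all j), the expected squared Frobenius error satisfies the exact identity E[‖A·Aᵀ − C·Cᵀ‖_F²] = (1/c) ∑_{j=1}^{N} |A^{(j)}|⁴ / p_j − (1/c) ‖A·Aᵀ‖_F², where |A^{(j)}| denotes the Euclidean norm of the j-th column of A. -/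
open Finset Matrix

/-- Squared Frobenius norm of a matrix. -/
def frobSq {m n : ℕ} (B : Matrix (Fin m) (Fin n) ℝ) : ℝ :=
  ∑ i, ∑ j, (B i j) ^ 2

/-- Squared Euclidean norm of the `j`-th column of `A`. -/
def colNormSq {M N : ℕ} (A : Matrix (Fin M) (Fin N) ℝ) (j : Fin N) : ℝ :=
  ∑ i, (A i j) ^ 2


lemma sum_pi_prod {c N : ℕ} (g : Fin c → Fin N → ℝ) :
    ∑ ω : Fin c → Fin N, ∏ t, g t (ω t) = ∏ t, ∑ j, g t j := by
  rw [Finset.prod_univ_sum, Fintype.piFinset_univ]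

lemma E0 {c N : ℕ} {p : Fin N → ℝ} (hp1 : ∑ j, p j = 1) :
    ∑ ω : Fin c → Fin N, (∏ t, p (ω t)) = 1 := by
  rw [sum_pi_prod (g := fun _ j => p j)]
  simp [hp1]

lemma E1 {c N : ℕ} {p : Fin N → ℝ} (hp1 : ∑ j, p j = 1) (F : Fin N → ℝ)
    (t0 : Fin c) :
    ∑ ω : Fin c → Fin N, (∏ t, p (ω t)) * F (ω t0) = ∑ j, p j * F j := by
  have h1 : ∀ ω : Fin c → Fin N, (∏ t, p (ω t)) * F (ω t0)
      = ∏ t, ((if t = t0 then F (ω t) else 1) * p (ω t)) := by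
    intro ω
    rw [Finset.prod_mul_distrib, Finset.prod_ite_eq', if_pos (mem_univ _), mul_comm]
  simp_rw [h1]
  rw [sum_pi_prod (g := fun t j => (if t = t0 then F j else 1) * p j)]
  have h2 : ∀ t : Fin c, ∑ j, (if t = t0 then F j else 1) * p j
      = if t = t0 then (∑ j, p j * F j) else 1 := by
    intro t
    by_cases h : t = t0 <;> simp [h, hp1, mul_comm]
  simp_rw [h2]
  rw [Finset.prod_ite_eq', if_pos (mem_univ _)]

lemma E2 {c N : ℕ} {p : Fin N → ℝ} (hp1 : ∑ j, p j = 1) (F G : Fin N → ℝ)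
    {t0 s0 : Fin c} (hts : t0 ≠ s0) :
    ∑ ω : Fin c → Fin N, (∏ t, p (ω t)) * (F (ω t0) * G (ω s0))
      = (∑ j, p j * F j) * (∑ j, p j * G j) := by
  have h1 : ∀ ω : Fin c → Fin N, (∏ t, p (ω t)) * (F (ω t0) * G (ω s0))
      = ∏ t, ((if t = t0 then F (ω t) else 1) * ((if t = s0 then G (ω t) else 1) * p (ω t))) := by
    intro ω
    rw [Finset.prod_mul_distrib, Finset.prod_mul_distrib,
      Finset.prod_ite_eq', Finset.prod_ite_eq', if_pos (mem_univ _), if_pos (mem_univ _)]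
    ring
  simp_rw [h1]
  rw [sum_pi_prod (g := fun t j => (if t = t0 then F j else 1) * ((if t = s0 then G j else 1) * p j))]
  have h2 : ∀ t : Fin c, ∑ j, (if t = t0 then F j else 1) * ((if t = s0 then G j else 1) * p j)
      = (if t = t0 then (∑ j, p j * F j) else 1) * (if t = s0 then (∑ j, p j * G j) else 1) := by
    intro t
    by_cases h : t = t0
    · subst h
      simp only [if_pos rfl, if_neg hts]
      simp [mul_comm]
    · by_cases h' : t = s0
      · subst h'
        simp only [if_neg h, if_pos rfl]
        simp [mul_comm]
      · simp [h, h', hp1]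
  simp_rw [h2]
  rw [Finset.prod_mul_distrib, Finset.prod_ite_eq', Finset.prod_ite_eq',
    if_pos (mem_univ _), if_pos (mem_univ _)]

lemma per_entry {c N : ℕ} (hc : 1 ≤ c) {p : Fin N → ℝ} (hp1 : ∑ j, p j = 1)
    (f : Fin N → ℝ) (S : ℝ) (hS : S = (c:ℝ) * ∑ j, p j * f j) :
    ∑ ω : Fin c → Fin N, (∏ t, p (ω t)) * (S - ∑ t, f (ω t))^2
      = (c:ℝ) * (∑ j, p j * (f j)^2) - S^2 / c := by
  have hc0 : (c:ℝ) ≠ 0 := Nat.cast_ne_zero.mpr (by omega)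
  set μ := ∑ j, p j * f j with hμ
  set ν := ∑ j, p j * (f j)^2 with hν
  have expand : ∀ ω : Fin c → Fin N,
      (∏ t, p (ω t)) * (S - ∑ t, f (ω t))^2
        = (∏ t, p (ω t)) * S^2
          - 2*S*((∏ t, p (ω t)) * ∑ t, f (ω t))
          + (∏ t, p (ω t)) * (∑ t, ∑ s, f (ω t) * f (ω s)) := by
    intro ω
    have hX : (∑ t, f (ω t))^2 = ∑ t, ∑ s, f (ω t) * f (ω s) := by
      rw [sq, Finset.sum_mul_sum]
    rw [← hX]; ring
  simp_rw [expand]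
  rw [Finset.sum_add_distrib, Finset.sum_sub_distrib]
  have h1 : ∑ ω : Fin c → Fin N, (∏ t, p (ω t)) * S^2 = S^2 := by
    rw [← Finset.sum_mul, E0 hp1, one_mul]
  have h2 : ∑ ω : Fin c → Fin N, 2*S*((∏ t, p (ω t)) * ∑ t, f (ω t))
      = 2*S*((c:ℝ)*μ) := by
    rw [← Finset.mul_sum]
    congr 1
    have : ∀ ω : Fin c → Fin N, (∏ t, p (ω t)) * ∑ t, f (ω t)
        = ∑ t, (∏ t', p (ω t')) * f (ω t) := fun ω => Finset.mul_sum _ _ _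
    simp_rw [this]
    rw [Finset.sum_comm]
    have := fun t0 => E1 (c := c) hp1 f t0
    simp_rw [this]
    simp [mul_comm]
    exact Or.inl hμ.symm
  have h3 : ∑ ω : Fin c → Fin N, (∏ t, p (ω t)) * (∑ t, ∑ s, f (ω t) * f (ω s))
      = (c:ℝ) * (ν - μ^2 + (c:ℝ)*μ^2) := by
    have step : ∀ ω : Fin c → Fin N, (∏ t, p (ω t)) * (∑ t, ∑ s, f (ω t) * f (ω s))
        = ∑ t, ∑ s, (∏ t', p (ω t')) * (f (ω t) * f (ω s)) := by
      intro ω; rw [Finset.mul_sum]; exact Finset.sum_congr rfl fun t _ => Finset.mul_sum _ _ _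
    simp_rw [step]
    rw [Finset.sum_comm]
    have inner : ∀ t : Fin c, ∑ ω : Fin c → Fin N, ∑ s, (∏ t', p (ω t')) * (f (ω t) * f (ω s))
        = ∑ s, ∑ ω : Fin c → Fin N, (∏ t', p (ω t')) * (f (ω t) * f (ω s)) := by
      intro t; exact Finset.sum_comm
    simp_rw [inner]
    have hval : ∀ t s : Fin c,
        ∑ ω : Fin c → Fin N, (∏ t', p (ω t')) * (f (ω t) * f (ω s))
          = if t = s then ν else μ^2 := by
      intro t s
      by_cases h : t = s
      · subst h
        rw [if_pos rfl]
        have h' := E1 (c := c) hp1 (fun j => f j * f j) t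
        rw [h', hν]
        exact Finset.sum_congr rfl fun j _ => by ring
      · rw [if_neg h, sq]
        exact E2 hp1 f f h
    simp_rw [hval]
    have hrow : ∀ t : Fin c, (∑ s : Fin c, if t = s then ν else μ^2)
        = ν - μ^2 + (c:ℝ)*μ^2 := by
      intro t
      have : ∀ s : Fin c, (if t = s then ν else μ^2)
          = (if t = s then ν - μ^2 else 0) + μ^2 := by
        intro s; by_cases h : t = s <;> simp [h]
      simp_rw [this]
      rw [Finset.sum_add_distrib, Finset.sum_ite_eq, if_pos (mem_univ _)]
      simp [mul_comm]
    simp_rw [hrow]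
    simp [mul_comm, mul_add]
  rw [h1, h2, h3, hS]
  field_simp
  ring

/-- Exact identity for the expected squared Frobenius error in the column
sampling model:
`E[‖A Aᵀ − C Cᵀ‖_F²] = (1/c) ∑_j |A^{(j)}|⁴ / p_j − (1/c) ‖A Aᵀ‖_F²`. -/
theorem expectation_frobSq_error_eq {M N : ℕ} (A : Matrix (Fin M) (Fin N) ℝ)
    (c : ℕ) (hc : 1 ≤ c) (p : Fin N → ℝ) (hp : ∀ j, 0 < p j)
    (hp1 : ∑ j, p j = 1) :
    ∑ ω : Fin c → Fin N, (∏ t, p (ω t)) *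
        frobSq (A * Aᵀ - (sampledC A c p ω) * (sampledC A c p ω)ᵀ)
      = (1 / c) * ∑ j, (colNormSq A j) ^ 2 / p j
        - (1 / c) * frobSq (A * Aᵀ) := by
  have hc0 : (c:ℝ) ≠ 0 := Nat.cast_ne_zero.mpr (by omega)
  -- f is the per-sample contribution
  set f : Fin M → Fin M → Fin N → ℝ := fun i k j => A i j * A k j / ((c:ℝ) * p j) with hf
  have hCC : ∀ (ω : Fin c → Fin N) i k,
      ((sampledC A c p ω) * (sampledC A c p ω)ᵀ) i k = ∑ t, f i k (ω t) := by
    intro ω i k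
    rw [Matrix.mul_apply]
    refine Finset.sum_congr rfl fun t _ => ?_
    have hpos : (0:ℝ) ≤ (c:ℝ) * p (ω t) := mul_nonneg (Nat.cast_nonneg c) (hp _).le
    simp only [sampledC, transpose_apply, hf]
    rw [div_mul_div_comm, Real.mul_self_sqrt hpos]
  have key : ∀ ω : Fin c → Fin N,
      frobSq (A * Aᵀ - (sampledC A c p ω) * (sampledC A c p ω)ᵀ)
        = ∑ i, ∑ k, ((A * Aᵀ) i k - ∑ t, f i k (ω t))^2 := by
    intro ω
    unfold frobSq
    refine Finset.sum_congr rfl fun i _ => Finset.sum_congr rfl fun k _ => ?_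
    rw [Matrix.sub_apply, hCC]
  simp_rw [key, Finset.mul_sum]
  rw [Finset.sum_comm]
  have swap2 : ∀ i, ∑ ω : Fin c → Fin N, ∑ k, (∏ t, p (ω t)) * ((A * Aᵀ) i k - ∑ t, f i k (ω t))^2
      = ∑ k, ∑ ω : Fin c → Fin N, (∏ t, p (ω t)) * ((A * Aᵀ) i k - ∑ t, f i k (ω t))^2 := by
    intro i; exact Finset.sum_comm
  simp_rw [swap2]
  have hS : ∀ i k, (A * Aᵀ) i k = (c:ℝ) * ∑ j, p j * f i k j := by
    intro i k
    rw [Matrix.mul_apply, Finset.mul_sum]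
    refine Finset.sum_congr rfl fun j _ => ?_
    rw [Matrix.transpose_apply]
    have hpj : p j ≠ 0 := (hp j).ne'
    simp only [hf]
    field_simp
  have hper : ∀ i k, ∑ ω : Fin c → Fin N, (∏ t, p (ω t)) * ((A * Aᵀ) i k - ∑ t, f i k (ω t))^2
      = (c:ℝ) * (∑ j, p j * (f i k j)^2) - ((A * Aᵀ) i k)^2 / c :=
    fun i k => per_entry hc hp1 (f i k) _ (hS i k)
  simp_rw [hper]
  have split : ∀ i : Fin M, ∑ k : Fin M,
      ((c:ℝ) * (∑ j, p j * (f i k j)^2) - ((A * Aᵀ) i k)^2 / c)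
      = (∑ k, (c:ℝ) * (∑ j, p j * (f i k j)^2)) - ∑ k, ((A * Aᵀ) i k)^2 / c :=
    fun i => Finset.sum_sub_distrib _ _
  simp_rw [split]
  rw [Finset.sum_sub_distrib]
  congr 1
  · -- main term
    have hterm : ∀ i k : Fin M, (c:ℝ) * (∑ j, p j * (f i k j)^2)
        = ∑ j, (A i j)^2 * (A k j)^2 / ((c:ℝ) * p j) := by
      intro i k
      rw [Finset.mul_sum]
      refine Finset.sum_congr rfl fun j _ => ?_
      have hpj : p j ≠ 0 := (hp j).ne'
      simp only [hf]
      field_simp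
    simp_rw [hterm]
    have sw1 : ∀ i : Fin M, ∑ k : Fin M, ∑ j, (A i j)^2 * (A k j)^2 / ((c:ℝ) * p j)
        = ∑ j, ∑ k : Fin M, (A i j)^2 * (A k j)^2 / ((c:ℝ) * p j) :=
      fun i => Finset.sum_comm
    simp_rw [sw1]
    rw [Finset.sum_comm]
    refine Finset.sum_congr rfl fun j _ => ?_
    have : ∑ i, ∑ k, (A i j)^2 * (A k j)^2 / ((c:ℝ) * p j)
        = (∑ i, ∑ k, (A i j)^2 * (A k j)^2) / ((c:ℝ) * p j) := by
      rw [Finset.sum_div]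
      exact Finset.sum_congr rfl fun i _ => (Finset.sum_div _ _ _).symm
    rw [this, ← Finset.sum_mul_sum]
    rw [show (∑ i, (A i j)^2) * (∑ k, (A k j)^2) = (colNormSq A j)^2 by rw [colNormSq, sq]]
    field_simp
  · -- frobSq term
    rw [frobSq, Finset.mul_sum]
    refine Finset.sum_congr rfl fun i _ => ?_
    rw [Finset.mul_sum]
    exact Finset.sum_congr rfl fun k _ => by rw [one_div, inv_mul_eq_div]
end

section
/- Let a_1, …, a_N be nonnegative real numbers, not all zero. For every probability vector p = (p_1, …, p_N) with p_j > 0 and ∑_j p_j = 1, one has ∑_{j=1}^{N} a_j² / p_j ≥ (∑_{j=1}^{N} a_j)², with equality when p_j = a_j / ∑_{j'} a_{j'}. Consequently, taking a_j = |A^{(j)}|², the probability p_j = |A^{(j)}|²/‖A‖_F² minimizes the expected squared error (1/c) ∑_j |A^{(j)}|⁴/p_j − (1/c)‖A·Aᵀ‖_F² over all positive probability vectors. -/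
open Finset

/-- For nonnegative reals `a_1, …, a_N`, not all zero: every positive
probability vector `p` satisfies `∑_j a_j² / p_j ≥ (∑_j a_j)²`, and equality
holds for the choice `p_j = a_j / ∑_{j'} a_{j'}`.  (This is the optimality of
the sampling probability proportional to `a_j = |A^{(j)}|²`.) -/
theorem sum_sq_div_prob_ge_sq_sum {N : ℕ} (a : Fin N → ℝ)
    (ha : ∀ j, 0 ≤ a j) (hane : ∃ j, a j ≠ 0) :
    (∀ p : Fin N → ℝ, (∀ j, 0 < p j) → ∑ j, p j = 1 →
        (∑ j, a j) ^ 2 ≤ ∑ j, (a j) ^ 2 / p j)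
      ∧ ∑ j, (a j) ^ 2 / (a j / ∑ j', a j') = (∑ j, a j) ^ 2 := by
  constructor
  · intro p hp hsum
    have key := Finset.sum_mul_sq_le_sq_mul_sq Finset.univ
      (fun j => a j / Real.sqrt (p j)) (fun j => Real.sqrt (p j))
    have h1 : ∀ j : Fin N, a j / Real.sqrt (p j) * Real.sqrt (p j) = a j := by
      intro j
      field_simp [Real.sqrt_ne_zero'.2 (hp j)]
    have h2 : ∀ j : Fin N, (a j / Real.sqrt (p j)) ^ 2 = a j ^ 2 / p j := by
      intro j
      rw [div_pow, Real.sq_sqrt (hp j).le]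
    have h3 : ∀ j : Fin N, (Real.sqrt (p j)) ^ 2 = p j := fun j =>
      Real.sq_sqrt (hp j).le
    simp only [h1, h2, h3, hsum, mul_one] at key
    exact key
  · have : ∀ j : Fin N, a j ^ 2 / (a j / ∑ j', a j') = a j * ∑ j', a j' := by
      intro j
      rcases eq_or_ne (a j) 0 with h | h
      · simp [h]
      · field_simp
    rw [Finset.sum_congr rfl fun j _ => this j, ← Finset.sum_mul, sq]
end

section
/- Let A ∈ ℝ^{M×N} and let 0 < β ≤ 1. Consider the column sampling model with c samples and a nearly optimal probability vector p, i.e., p_j ≥ β |A^{(j)}|² / ‖A‖_F² for all j (and p_j > 0). Then E[‖A·Aᵀ − C·Cᵀ‖_F²] ≤ (1/(β c)) ‖A‖_F⁴ − (1/c) ‖A·Aᵀ‖_F². -/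
open Finset Matrix

section aux
variable {N c : ℕ} {p : Fin N → ℝ}

lemma sum_w (hp1 : ∑ j, p j = 1) :
    ∑ ω : Fin c → Fin N, ∏ t, p (ω t) = 1 := by
  rw [← Fintype.prod_sum (fun _ j => p j)]
  simp [hp1]

lemma exp_one (hp1 : ∑ j, p j = 1) (g : Fin N → ℝ) (t₀ : Fin c) :
    ∑ ω : Fin c → Fin N, (∏ t, p (ω t)) * g (ω t₀) = ∑ j, p j * g j := by
  have h1 : ∀ ω : Fin c → Fin N, (∏ t, p (ω t)) * g (ω t₀)
      = ∏ t, (p (ω t) * (if t = t₀ then g (ω t) else 1)) := by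
    intro ω
    rw [Finset.prod_mul_distrib, Finset.prod_ite_eq' Finset.univ t₀ (fun t => g (ω t))]
    simp
  simp_rw [h1]
  rw [← Fintype.prod_sum (fun t j => p j * (if t = t₀ then g j else 1))]
  have h2 : ∀ t : Fin c, (∑ j, p j * (if t = t₀ then g j else 1))
      = if t = t₀ then (∑ j, p j * g j) else 1 := by
    intro t; by_cases h : t = t₀ <;> simp [h, hp1]
  simp_rw [h2]
  rw [Finset.prod_ite_eq' Finset.univ t₀ (fun _ => ∑ j, p j * g j)]
  simp

lemma exp_two (hp1 : ∑ j, p j = 1) (g h : Fin N → ℝ) (t₀ s₀ : Fin c) (hts : t₀ ≠ s₀) :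
    ∑ ω : Fin c → Fin N, (∏ t, p (ω t)) * (g (ω t₀) * h (ω s₀))
      = (∑ j, p j * g j) * (∑ j, p j * h j) := by
  have h1 : ∀ ω : Fin c → Fin N, (∏ t, p (ω t)) * (g (ω t₀) * h (ω s₀))
      = ∏ t, (p (ω t) * ((if t = t₀ then g (ω t) else 1) * (if t = s₀ then h (ω t) else 1))) := by
    intro ω
    rw [Finset.prod_mul_distrib, Finset.prod_mul_distrib,
      Finset.prod_ite_eq' Finset.univ t₀ (fun t => g (ω t)),
      Finset.prod_ite_eq' Finset.univ s₀ (fun t => h (ω t))]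
    simp
  simp_rw [h1]
  rw [← Fintype.prod_sum (fun t j => p j * ((if t = t₀ then g j else 1) * (if t = s₀ then h j else 1)))]
  have h2 : ∀ t : Fin c, (∑ j, p j * ((if t = t₀ then g j else 1) * (if t = s₀ then h j else 1)))
      = (if t = t₀ then (∑ j, p j * g j) else 1) * (if t = s₀ then (∑ j, p j * h j) else 1) := by
    intro t
    by_cases h3 : t = t₀
    · subst h3; simp [if_neg (by exact hts), hp1]
    · by_cases h4 : t = s₀
      · subst h4; simp [if_neg (Ne.symm hts), h3, hp1]
      · simp [h3, h4, hp1]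
  simp_rw [h2]
  rw [Finset.prod_mul_distrib,
    Finset.prod_ite_eq' Finset.univ t₀ (fun _ => ∑ j, p j * g j),
    Finset.prod_ite_eq' Finset.univ s₀ (fun _ => ∑ j, p j * h j)]
  simp

end aux

section entry
variable {N c : ℕ} {p : Fin N → ℝ}

lemma entry_exp (hp1 : ∑ j, p j = 1) (g : Fin N → ℝ) :
    ∑ ω : Fin c → Fin N, (∏ t, p (ω t)) * ((c : ℝ) * (∑ j, p j * g j) - ∑ t, g (ω t)) ^ 2
      = c * (∑ j, p j * (g j) ^ 2) - c * (∑ j, p j * g j) ^ 2 := by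
  set E := ∑ j, p j * g j with hE
  set Q := ∑ j, p j * (g j) ^ 2 with hQ
  have key : ∀ ω : Fin c → Fin N,
      (∏ t, p (ω t)) * ((c : ℝ) * E - ∑ t, g (ω t)) ^ 2
        = (c : ℝ) ^ 2 * E ^ 2 * (∏ t, p (ω t))
          - 2 * (c : ℝ) * E * (∑ t, (∏ r, p (ω r)) * g (ω t))
          + ∑ t, ∑ s, (∏ r, p (ω r)) * (g (ω t) * g (ω s)) := by
    intro ω
    have hS : ∑ t, ∑ s, (∏ r, p (ω r)) * (g (ω t) * g (ω s))
        = (∏ r, p (ω r)) * ((∑ t, g (ω t)) * (∑ s, g (ω s))) := by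
      rw [Finset.sum_mul_sum, Finset.mul_sum]
      exact Finset.sum_congr rfl fun t _ => by rw [Finset.mul_sum]
    rw [hS, ← Finset.mul_sum]
    ring
  simp_rw [key]
  rw [Finset.sum_add_distrib, Finset.sum_sub_distrib, ← Finset.mul_sum, sum_w hp1]
  have hlin : (∑ ω : Fin c → Fin N, ∑ t, (∏ r, p (ω r)) * g (ω t)) = (c : ℝ) * E := by
    rw [Finset.sum_comm]
    have : ∀ t : Fin c, (∑ ω : Fin c → Fin N, (∏ r, p (ω r)) * g (ω t)) = E :=
      fun t => exp_one hp1 g t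
    simp_rw [this]
    simp [mul_comm]
  rw [← Finset.mul_sum, hlin]
  have hquad : (∑ ω : Fin c → Fin N, ∑ t, ∑ s, (∏ r, p (ω r)) * (g (ω t) * g (ω s)))
      = (c : ℝ) * Q + ((c : ℝ) ^ 2 - c) * E ^ 2 := by
    rw [Finset.sum_comm]
    have h2 : ∀ t : Fin c, (∑ ω : Fin c → Fin N, ∑ s, (∏ r, p (ω r)) * (g (ω t) * g (ω s)))
        = Q + ((c : ℝ) - 1) * E ^ 2 := by
      intro t
      rw [Finset.sum_comm]
      have h3 : ∀ s : Fin c, (∑ ω : Fin c → Fin N, (∏ r, p (ω r)) * (g (ω t) * g (ω s)))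
          = if t = s then Q else E ^ 2 := by
        intro s
        by_cases h : t = s
        · subst h
          rw [if_pos rfl]
          have : ∀ ω : Fin c → Fin N, (∏ r, p (ω r)) * (g (ω t) * g (ω t))
              = (∏ r, p (ω r)) * ((fun j => (g j) ^ 2) (ω t)) := by
            intro ω; simp [sq]
          simp_rw [this]
          exact exp_one hp1 (fun j => (g j) ^ 2) t
        · rw [if_neg h, exp_two hp1 g g t s h, ← hE, sq]
      simp_rw [h3]
      have h4 : ∀ s : Fin c, (if t = s then Q else E ^ 2)
          = E ^ 2 + (if t = s then Q - E ^ 2 else 0) := by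
        intro s; split <;> ring
      simp_rw [h4]
      rw [Finset.sum_add_distrib, Finset.sum_const, Finset.sum_ite_eq]
      simp [Finset.card_univ]
      ring
    simp_rw [h2]
    rw [Finset.sum_const]
    simp [Finset.card_univ]
    ring
  rw [hquad]
  ring

end entry

/-- For a nearly optimal sampling probability, i.e.
`p_j ≥ β |A^{(j)}|² / ‖A‖_F²` with `0 < β ≤ 1`, the expected squared Frobenius
error satisfies `E[‖A Aᵀ − C Cᵀ‖_F²] ≤ (1/(β c)) ‖A‖_F⁴ − (1/c) ‖A Aᵀ‖_F²`. -/
theorem expectation_frobSq_error_nearlyOptimal {M N : ℕ}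
    (A : Matrix (Fin M) (Fin N) ℝ) (β : ℝ) (hβ0 : 0 < β) (hβ1 : β ≤ 1)
    (c : ℕ) (hc : 1 ≤ c)
    (p : Fin N → ℝ) (hp : ∀ j, 0 < p j) (hp1 : ∑ j, p j = 1)
    (hnear : ∀ j, β * colNormSq A j / frobSq A ≤ p j) :
    ∑ ω : Fin c → Fin N, (∏ t, p (ω t)) *
        frobSq (A * Aᵀ - (sampledC A c p ω) * (sampledC A c p ω)ᵀ)
      ≤ (1 / (β * c)) * (frobSq A) ^ 2 - (1 / c) * frobSq (A * Aᵀ) := by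
  have hc0 : (0 : ℝ) < (c : ℝ) := by exact_mod_cast hc
  set g : Fin M → Fin M → Fin N → ℝ := fun i k j => A i j * A k j / (c * p j) with hg
  -- entries of C Cᵀ
  have hCC : ∀ (ω : Fin c → Fin N) (i k : Fin M),
      ((sampledC A c p ω) * (sampledC A c p ω)ᵀ) i k = ∑ t, g i k (ω t) := by
    intro ω i k
    rw [Matrix.mul_apply]
    refine Finset.sum_congr rfl fun t _ => ?_
    have hpos : (0 : ℝ) ≤ (c : ℝ) * p (ω t) := le_of_lt (mul_pos hc0 (hp (ω t)))
    simp only [sampledC, transpose_apply, hg]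
    rw [div_mul_div_comm, Real.mul_self_sqrt hpos]
  have hm : ∀ i k : Fin M, (c : ℝ) * (∑ j, p j * g i k j) = (A * Aᵀ) i k := by
    intro i k
    rw [Matrix.mul_apply, Finset.mul_sum]
    refine Finset.sum_congr rfl fun j _ => ?_
    simp only [hg, transpose_apply]
    field_simp [(hp j).ne', hc0.ne']
  -- rewrite LHS
  have lhs_eq : ∑ ω : Fin c → Fin N, (∏ t, p (ω t)) *
      frobSq (A * Aᵀ - (sampledC A c p ω) * (sampledC A c p ω)ᵀ)
      = ∑ i, ∑ k, ((c : ℝ) * (∑ j, p j * (g i k j) ^ 2) - (c : ℝ) * (∑ j, p j * g i k j) ^ 2) := by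
    have h1 : ∀ ω : Fin c → Fin N, (∏ t, p (ω t)) *
        frobSq (A * Aᵀ - (sampledC A c p ω) * (sampledC A c p ω)ᵀ)
        = ∑ i, ∑ k, (∏ t, p (ω t)) *
            ((c : ℝ) * (∑ j, p j * g i k j) - ∑ t, g i k (ω t)) ^ 2 := by
      intro ω
      rw [frobSq, Finset.mul_sum]
      refine Finset.sum_congr rfl fun i _ => ?_
      rw [Finset.mul_sum]
      refine Finset.sum_congr rfl fun k _ => ?_
      rw [Matrix.sub_apply, hCC ω i k, hm i k]
    simp_rw [h1]
    rw [Finset.sum_comm]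
    refine Finset.sum_congr rfl fun i _ => ?_
    rw [Finset.sum_comm]
    refine Finset.sum_congr rfl fun k _ => ?_
    exact entry_exp hp1 (g i k)
  rw [lhs_eq]
  -- compute the two pieces
  have hQ : ∀ i k : Fin M, (c : ℝ) * (∑ j, p j * (g i k j) ^ 2)
      = ∑ j, (A i j) ^ 2 * (A k j) ^ 2 / ((c : ℝ) * p j) := by
    intro i k
    rw [Finset.mul_sum]
    refine Finset.sum_congr rfl fun j _ => ?_
    have hpj := (hp j).ne'
    simp only [hg]
    field_simp
  have hE : ∀ i k : Fin M, (c : ℝ) * (∑ j, p j * g i k j) ^ 2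
      = ((A * Aᵀ) i k) ^ 2 / c := by
    intro i k
    have := hm i k
    have h2 : (∑ j, p j * g i k j) = (A * Aᵀ) i k / c := by
      field_simp at this ⊢; linarith [this]
    rw [h2]
    field_simp
  have step2 : ∑ i, ∑ k, ((c : ℝ) * (∑ j, p j * (g i k j) ^ 2) - (c : ℝ) * (∑ j, p j * g i k j) ^ 2)
      = (∑ j, (colNormSq A j) ^ 2 / ((c : ℝ) * p j)) - (1 / c) * frobSq (A * Aᵀ) := by
    simp_rw [Finset.sum_sub_distrib]
    congr 1
    · simp_rw [hQ]
      have h5 : ∀ i : Fin M, (∑ k, ∑ j, (A i j) ^ 2 * (A k j) ^ 2 / ((c : ℝ) * p j))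
          = ∑ j, (A i j) ^ 2 * colNormSq A j / ((c : ℝ) * p j) := by
        intro i
        rw [Finset.sum_comm]
        refine Finset.sum_congr rfl fun j _ => ?_
        rw [colNormSq, ← Finset.sum_div, ← Finset.mul_sum]
      simp_rw [h5]
      rw [Finset.sum_comm]
      refine Finset.sum_congr rfl fun j _ => ?_
      rw [← Finset.sum_div, ← Finset.sum_mul,
        show (∑ i, (A i j) ^ 2) = colNormSq A j from rfl, sq]
    · simp_rw [hE]
      rw [frobSq, Finset.mul_sum]
      refine Finset.sum_congr rfl fun i _ => ?_
      rw [Finset.mul_sum]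
      refine Finset.sum_congr rfl fun k _ => ?_
      field_simp
  rw [step2]
  -- inequality part
  have hcol : ∀ j, 0 ≤ colNormSq A j := fun j => Finset.sum_nonneg fun i _ => sq_nonneg _
  have hF : frobSq A = ∑ j, colNormSq A j := by
    rw [frobSq, Finset.sum_comm]; rfl
  have hFnn : 0 ≤ frobSq A := hF ▸ Finset.sum_nonneg fun j _ => hcol j
  have key : ∀ j, (colNormSq A j) ^ 2 / ((c : ℝ) * p j)
      ≤ colNormSq A j * frobSq A / (β * c) := by
    intro j
    rcases eq_or_lt_of_le (hcol j) with h0 | h0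
    · rw [← h0]; simp
    · have hFj : colNormSq A j ≤ frobSq A := by
        rw [hF]
        exact Finset.single_le_sum (fun j _ => hcol j) (Finset.mem_univ j)
      have hFpos : 0 < frobSq A := lt_of_lt_of_le h0 hFj
      have hpj : β * colNormSq A j / frobSq A ≤ p j := hnear j
      have hlb : 0 < β * colNormSq A j / frobSq A := by positivity
      calc (colNormSq A j) ^ 2 / ((c : ℝ) * p j)
          ≤ (colNormSq A j) ^ 2 / ((c : ℝ) * (β * colNormSq A j / frobSq A)) := by
            apply div_le_div_of_nonneg_left (sq_nonneg _) (by positivity)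
            exact mul_le_mul_of_nonneg_left hpj (le_of_lt hc0)
        _ = colNormSq A j * frobSq A / (β * c) := by
            field_simp
  have hsum : (∑ j, (colNormSq A j) ^ 2 / ((c : ℝ) * p j))
      ≤ (1 / (β * c)) * (frobSq A) ^ 2 := by
    calc (∑ j, (colNormSq A j) ^ 2 / ((c : ℝ) * p j))
        ≤ ∑ j, colNormSq A j * frobSq A / (β * c) :=
          Finset.sum_le_sum fun j _ => key j
      _ = (1 / (β * c)) * (frobSq A) ^ 2 := by
          rw [← Finset.sum_div, ← Finset.sum_mul, ← hF]
          field_simp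
  linarith
end

section
/- Let 0 < a < δ, let q : Fin M → ℝ be not identically zero, let f : ℝ → ℝ satisfy |f(δ−a)| ≥ |f(r)| ≥ |f(δ+a)| > 0 for all r ∈ [δ−a, δ+a], and let r_{ij} ∈ [δ−a, δ+a] for all i, j. Define the M×N matrix A by A_{ij} = f(r_{ij}) · q_i. Then for every column index j, |A^{(j)}|² / ‖A‖_F² ≤ (1/N) · f(δ−a)² / f(δ+a)². Equivalently, the uniform probability 1/N satisfies 1/N ≥ β · |A^{(j)}|²/‖A‖_F² with β = f(δ+a)²/f(δ−a)², i.e., uniform sampling is a nearly optimal probability with parameter β. -/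
open Finset

/-- For a far-field kernel matrix `A i j = f (r i j) * q i` with all pairwise
distances `r i j ∈ [δ−a, δ+a]` and `|f(δ−a)| ≥ |f r| ≥ |f(δ+a)| > 0` on that
interval, every column satisfies
`|A^{(j)}|² / ‖A‖_F² ≤ (1/N) f(δ−a)² / f(δ+a)²`; equivalently, the uniform
probability `1/N` is nearly optimal with `β = f(δ+a)² / f(δ−a)²`. -/
theorem uniform_sampling_nearly_optimal {M N : ℕ} (a δ : ℝ)
    (ha : 0 < a) (haδ : a < δ)
    (q : Fin M → ℝ) (hq : ∃ i, q i ≠ 0)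
    (f : ℝ → ℝ)
    (hf_upper : ∀ r ∈ Set.Icc (δ - a) (δ + a), |f r| ≤ |f (δ - a)|)
    (hf_lower : ∀ r ∈ Set.Icc (δ - a) (δ + a), |f (δ + a)| ≤ |f r|)
    (hf_pos : 0 < |f (δ + a)|)
    (r : Fin M → Fin N → ℝ)
    (hr : ∀ i j, r i j ∈ Set.Icc (δ - a) (δ + a))
    (A : Matrix (Fin M) (Fin N) ℝ)
    (hA : ∀ i j, A i j = f (r i j) * q i) (j : Fin N) :
    (∑ i, (A i j) ^ 2) / (∑ i, ∑ j', (A i j') ^ 2)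
        ≤ (1 / N) * (f (δ - a)) ^ 2 / (f (δ + a)) ^ 2
      ∧ (f (δ + a)) ^ 2 / (f (δ - a)) ^ 2 *
          ((∑ i, (A i j) ^ 2) / (∑ i, ∑ j', (A i j') ^ 2)) ≤ 1 / N := by
  have hN : 0 < (N : ℝ) := by exact_mod_cast (j.pos)
  obtain ⟨i0, hi0⟩ := hq
  set Q : ℝ := ∑ i, (q i) ^ 2 with hQdef
  have hQ : 0 < Q := by
    apply Finset.sum_pos' (fun i _ => sq_nonneg _)
    exact ⟨i0, Finset.mem_univ _, by positivity⟩
  have hfb : 0 < (f (δ + a)) ^ 2 := by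
    rw [← sq_abs]; positivity
  have hfa_abs : 0 < |f (δ - a)| :=
    lt_of_lt_of_le hf_pos (hf_upper _ ⟨by linarith, le_refl _⟩)
  have hfa : 0 < (f (δ - a)) ^ 2 := by
    rw [← sq_abs]; positivity
  -- column bound
  have hcol : (∑ i, (A i j) ^ 2) ≤ (f (δ - a)) ^ 2 * Q := by
    rw [hQdef, Finset.mul_sum]
    apply Finset.sum_le_sum
    intro i _
    rw [hA, mul_pow]
    apply mul_le_mul_of_nonneg_right _ (sq_nonneg _)
    rw [← sq_abs (f (r i j)), ← sq_abs (f (δ - a))]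
    exact pow_le_pow_left₀ (abs_nonneg _) (hf_upper _ (hr i j)) 2
  -- Frobenius lower bound
  have hfrob : (N : ℝ) * (f (δ + a)) ^ 2 * Q ≤ ∑ i, ∑ j', (A i j') ^ 2 := by
    rw [hQdef, Finset.mul_sum]
    apply Finset.sum_le_sum
    intro i _
    have : ∀ j' ∈ Finset.univ, (f (δ + a)) ^ 2 * (q i) ^ 2 ≤ (A i j') ^ 2 := by
      intro j' _
      rw [hA, mul_pow]
      apply mul_le_mul_of_nonneg_right _ (sq_nonneg _)
      rw [← sq_abs (f (r i j')), ← sq_abs (f (δ + a))]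
      exact pow_le_pow_left₀ (abs_nonneg _) (hf_lower _ (hr i j')) 2
    calc (N : ℝ) * (f (δ + a)) ^ 2 * (q i) ^ 2
        = ∑ _j' : Fin N, (f (δ + a)) ^ 2 * (q i) ^ 2 := by
          rw [Finset.sum_const, Finset.card_univ, Fintype.card_fin, nsmul_eq_mul]; ring
      _ ≤ ∑ j', (A i j') ^ 2 := Finset.sum_le_sum this
  have hden : 0 < (N : ℝ) * (f (δ + a)) ^ 2 * Q := by positivity
  have h1 : (∑ i, (A i j) ^ 2) / (∑ i, ∑ j', (A i j') ^ 2)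
      ≤ ((f (δ - a)) ^ 2 * Q) / ((N : ℝ) * (f (δ + a)) ^ 2 * Q) :=
    div_le_div₀ (by positivity) hcol hden hfrob
  have heq : ((f (δ - a)) ^ 2 * Q) / ((N : ℝ) * (f (δ + a)) ^ 2 * Q)
      = (1 / N) * (f (δ - a)) ^ 2 / (f (δ + a)) ^ 2 := by
    field_simp
  have hmain := h1.trans_eq heq
  refine ⟨hmain, ?_⟩
  have h2 := mul_le_mul_of_nonneg_left hmain
    (le_of_lt (div_pos hfb hfa))
  refine h2.trans_eq ?_
  field_simp
  have hb0 := abs_pos.mp hf_pos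
  have hc0 := abs_pos.mp hfa_abs
  field_simp
end

section
/- Let A ∈ ℝ^{M×N}, let q : Fin M → ℝ with q_i ≠ 0 for all i, and let B ≥ 0 be such that for all i, i' and all j, |q_{i'} A_{ij} − q_i A_{i'j}| ≤ |q_i| · |q_{i'}| · B. Then ‖A‖_F⁴ − ‖A·Aᵀ‖_F² ≤ N · B² · (∑_{i=1}^{M} q_i²) · ‖A‖_F². -/
open Finset

lemma lagrange_aux {N : ℕ} (u v : Fin N → ℝ) (t : ℝ) :
    (∑ j, u j ^ 2) * (∑ j, v j ^ 2) - (∑ j, u j * v j) ^ 2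
      ≤ (∑ j, u j ^ 2) * ∑ j, (v j - t * u j) ^ 2 := by
  have hS : ∑ j, (v j - t * u j) ^ 2
      = (∑ j, v j ^ 2) - 2 * t * (∑ j, u j * v j) + t ^ 2 * ∑ j, u j ^ 2 := by
    rw [Finset.mul_sum, Finset.mul_sum, ← Finset.sum_sub_distrib, ← Finset.sum_add_distrib]
    exact Finset.sum_congr rfl fun j _ => by ring
  rw [hS]
  nlinarith [sq_nonneg ((∑ j, u j * v j) - t * ∑ j, u j ^ 2)]

/-- Deterministic row-perturbation bound: if `|q_{i'} A_{ij} − q_i A_{i'j}| ≤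
|q_i| |q_{i'}| B` for all `i, i', j` (with all `q_i ≠ 0`, `B ≥ 0`), then
`‖A‖_F⁴ − ‖A Aᵀ‖_F² ≤ N B² (∑_i q_i²) ‖A‖_F²`. -/
theorem frob_fourth_sub_frobSq_AAT_le {M N : ℕ}
    (A : Matrix (Fin M) (Fin N) ℝ)
    (q : Fin M → ℝ) (hq : ∀ i, q i ≠ 0)
    (B : ℝ) (hB : 0 ≤ B)
    (h : ∀ i i' j, |q i' * A i j - q i * A i' j| ≤ |q i| * |q i'| * B) :
    (∑ i, ∑ j, (A i j) ^ 2) ^ 2 - ∑ i, ∑ i', (∑ j, A i j * A i' j) ^ 2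
      ≤ N * B ^ 2 * (∑ i, (q i) ^ 2) * (∑ i, ∑ j, (A i j) ^ 2) := by
  have key : ∀ i i' : Fin M,
      (∑ j, A i j ^ 2) * (∑ j, A i' j ^ 2) - (∑ j, A i j * A i' j) ^ 2
        ≤ (∑ j, A i j ^ 2) * (N * B ^ 2 * q i' ^ 2) := by
    intro i i'
    have h1 := lagrange_aux (A i) (A i') (q i' / q i)
    have hqi := hq i
    have hqi2 : (0:ℝ) < q i ^ 2 := by positivity
    have h2 : ∑ j, (A i' j - (q i' / q i) * A i j) ^ 2 ≤ N * B ^ 2 * q i' ^ 2 := by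
      have hterm : ∀ j, (A i' j - (q i' / q i) * A i j) ^ 2 ≤ B ^ 2 * q i' ^ 2 := by
        intro j
        have h3 : (q i' * A i j - q i * A i' j) ^ 2 ≤ q i ^ 2 * q i' ^ 2 * B ^ 2 := by
          calc (q i' * A i j - q i * A i' j) ^ 2
              = |q i' * A i j - q i * A i' j| ^ 2 := (sq_abs _).symm
            _ ≤ (|q i| * |q i'| * B) ^ 2 :=
                pow_le_pow_left₀ (abs_nonneg _) (h i i' j) 2
            _ = q i ^ 2 * q i' ^ 2 * B ^ 2 := by
                rw [mul_pow, mul_pow, sq_abs, sq_abs]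
        have e : (A i' j - (q i' / q i) * A i j) ^ 2
            = (q i' * A i j - q i * A i' j) ^ 2 / q i ^ 2 := by
          field_simp
          ring
        rw [e, div_le_iff₀ hqi2]
        nlinarith [h3]
      calc ∑ j, (A i' j - (q i' / q i) * A i j) ^ 2
          ≤ ∑ _j : Fin N, B ^ 2 * q i' ^ 2 :=
            Finset.sum_le_sum fun j _ => hterm j
        _ = N * B ^ 2 * q i' ^ 2 := by
            simp [Finset.sum_const, mul_assoc]
    have hS : (0:ℝ) ≤ ∑ j, A i j ^ 2 := Finset.sum_nonneg fun j _ => sq_nonneg _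
    exact h1.trans (mul_le_mul_of_nonneg_left h2 hS)
  have expand : (∑ i, ∑ j, A i j ^ 2) ^ 2
      = ∑ i, ∑ i', (∑ j, A i j ^ 2) * (∑ j, A i' j ^ 2) := by
    rw [sq, Finset.sum_mul_sum]
  calc (∑ i, ∑ j, (A i j) ^ 2) ^ 2 - ∑ i, ∑ i', (∑ j, A i j * A i' j) ^ 2
      = ∑ i, ∑ i', ((∑ j, A i j ^ 2) * (∑ j, A i' j ^ 2)
          - (∑ j, A i j * A i' j) ^ 2) := by
        rw [expand, ← Finset.sum_sub_distrib]
        exact Finset.sum_congr rfl fun i _ => (Finset.sum_sub_distrib _ _).symm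
    _ ≤ ∑ i, ∑ i', (∑ j, A i j ^ 2) * (N * B ^ 2 * q i' ^ 2) :=
        Finset.sum_le_sum fun i _ => Finset.sum_le_sum fun i' _ => key i i'
    _ = N * B ^ 2 * (∑ i, (q i) ^ 2) * (∑ i, ∑ j, (A i j) ^ 2) := by
        simp only [← Finset.mul_sum, ← Finset.sum_mul]
        ring
end
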